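/- arXiv:1408.6706 — 8 statements merged into one kernel-verified Lean document; each statement's English description precedes it below -/
import Mathlib

section
/- Let (S,R) be an argumentation network, V₀ : S → [0,1] an initial assignment, and let (V_i) be the Gabbay-Rodrigues iteration sequence from V₀. Suppose h : S → [0,1] satisfies: (i) in(h) ⊆ in(V₀) and out(h) ⊆ out(V₀); (ii) h(X) = 1 implies h(Y) = 0 for all Y ∈ Att(X); (iii) h(X) = 0 implies h(Y) = 1 for some Y ∈ Att(X); and (iv) for every g : S → [0,1] satisfying (i)–(iii) in place of h, in(g) ⊆ in(h) and out(g) ⊆ out(h). Then there exists a smallest (under set inclusion) complete extension E of (S,R) with in(h) ⊆ E and out(h) ⊆ E⁺, and for every X ∈ S the sequence V_i(X) converges, with lim_{i→∞} V_i(X) = 1 if X ∈ E, lim_{i→∞} V_i(X) = 0 if E → X, and lim_{i→∞} V_i(X) = 1/2 otherwise. -/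
open Filter Topology

variable {S : Type*}

/-- Maximum of `V` over the attackers of `X` (i.e. `{Y | R Y X}`),
with the convention that the maximum over the empty set is `0`. -/
noncomputable def attMax [Fintype S] (R : S → S → Prop) [DecidableRel R] (V : S → ℝ) (X : S) : ℝ :=
  (Finset.univ.filter (fun Y => R Y X)).fold max 0 V

/-- One step of the Gabbay-Rodrigues iteration. -/
noncomputable def grStep [Fintype S] (R : S → S → Prop) [DecidableRel R] (V : S → ℝ) (X : S) : ℝ :=
  (1 - V X) * min (1/2) (1 - attMax R V X) + V X * max (1/2) (1 - attMax R V X)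

/-- The Gabbay-Rodrigues iteration sequence from the initial assignment `V0`. -/
noncomputable def grSeq [Fintype S] (R : S → S → Prop) [DecidableRel R] (V0 : S → ℝ) : ℕ → S → ℝ
  | 0 => V0
  | i + 1 => grStep R (grSeq R V0 i)

def inSet (V : S → ℝ) : Set S := {X | V X = 1}

def outSet (V : S → ℝ) : Set S := {X | V X = 0}

def conflictFree (R : S → S → Prop) (E : Set S) : Prop := ∀ X ∈ E, ∀ Y ∈ E, ¬ R X Y

def acceptable (R : S → S → Prop) (E : Set S) (X : S) : Prop := ∀ Y, R Y X → ∃ Z ∈ E, R Z Y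

def admissible (R : S → S → Prop) (E : Set S) : Prop :=
  conflictFree R E ∧ ∀ X ∈ E, acceptable R E X

def completeExt (R : S → S → Prop) (E : Set S) : Prop :=
  admissible R E ∧ ∀ X, acceptable R E X → X ∈ E

/-- `E⁺` : the set of arguments attacked by `E`. -/
def plusSet (R : S → S → Prop) (E : Set S) : Set S := {X | ∃ Y ∈ E, R Y X}

/-- The GR sequence is stable at iteration `k` if every node with a crisp value at
iteration `k` keeps that value at iteration `k+1`. -/
def grStable [Fintype S] (R : S → S → Prop) [DecidableRel R] (V0 : S → ℝ) (k : ℕ) : Prop :=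
  ∀ X : S, (grSeq R V0 k X = 0 ∨ grSeq R V0 k X = 1) → grSeq R V0 (k + 1) X = grSeq R V0 k X

section aux
variable [Fintype S] {R : S → S → Prop} [DecidableRel R]

lemma attMax_nonneg (V : S → ℝ) (X : S) : 0 ≤ attMax R V X :=
  (Finset.le_fold_max _).2 (Or.inl le_rfl)

lemma le_attMax {V : S → ℝ} {X Y : S} (hY : R Y X) : V Y ≤ attMax R V X :=
  (Finset.le_fold_max _).2 (Or.inr ⟨Y, by simp [hY], le_rfl⟩)

lemma attMax_le {V : S → ℝ} {X : S} {c : ℝ} (hc : 0 ≤ c) (hall : ∀ Y, R Y X → V Y ≤ c) :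
    attMax R V X ≤ c :=
  (Finset.fold_max_le _).2 ⟨hc, fun Y hY => hall Y ((Finset.mem_filter.1 hY).2)⟩

lemma grStep_cases (V : S → ℝ) (X : S) :
    (attMax R V X ≤ 1/2 ∧ grStep R V X = (1 - V X) * (1/2) + V X * (1 - attMax R V X)) ∨
    (1/2 ≤ attMax R V X ∧ grStep R V X = (1 - V X) * (1 - attMax R V X) + V X * (1/2)) := by
  rcases le_total (attMax R V X) (1/2) with hm | hm
  · exact Or.inl ⟨hm, by rw [grStep, min_eq_left (by linarith), max_eq_right (by linarith)]⟩
  · exact Or.inr ⟨hm, by rw [grStep, min_eq_right (by linarith), max_eq_left (by linarith)]⟩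

lemma grStep_bounds {V : S → ℝ} (hV : ∀ Y, V Y ∈ Set.Icc (0:ℝ) 1) (X : S) :
    grStep R V X ∈ Set.Icc (0:ℝ) 1 ∧
    grStep R V X ≤ (1 - attMax R V X) + V X / 2 ∧
    1/2 + V X / 2 - attMax R V X ≤ grStep R V X := by
  have hm0 := attMax_nonneg (R := R) V X
  have hm1 : attMax R V X ≤ 1 := attMax_le zero_le_one (fun Y _ => (hV Y).2)
  obtain ⟨hv0, hv1⟩ := hV X
  rcases grStep_cases (R := R) V X with ⟨hm, he⟩ | ⟨hm, he⟩ <;> rw [he] <;>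
    refine ⟨⟨by nlinarith, by nlinarith⟩, by nlinarith, by nlinarith⟩

lemma grStep_eq_one {V : S → ℝ} (hV : ∀ Y, V Y ∈ Set.Icc (0:ℝ) 1) {X : S}
    (hs : grStep R V X = 1) : V X = 1 ∧ attMax R V X = 0 := by
  have hm0 := attMax_nonneg (R := R) V X
  have hm1 : attMax R V X ≤ 1 := attMax_le zero_le_one (fun Y _ => (hV Y).2)
  obtain ⟨hv0, hv1⟩ := hV X
  rcases grStep_cases (R := R) V X with ⟨hm, he⟩ | ⟨hm, he⟩ <;> rw [hs] at he
  · have hvx : V X = 1 := le_antisymm hv1 (by nlinarith [mul_nonneg hv0 hm0])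
    rw [hvx] at he
    exact ⟨hvx, by linarith⟩
  · exfalso; nlinarith [mul_nonneg (by linarith : (0:ℝ) ≤ 1 - V X) (by linarith : (0:ℝ) ≤ 1 - attMax R V X)]

lemma grStep_eq_zero {V : S → ℝ} (hV : ∀ Y, V Y ∈ Set.Icc (0:ℝ) 1) {X : S}
    (hs : grStep R V X = 0) : V X = 0 ∧ attMax R V X = 1 := by
  have hm0 := attMax_nonneg (R := R) V X
  have hm1 : attMax R V X ≤ 1 := attMax_le zero_le_one (fun Y _ => (hV Y).2)
  obtain ⟨hv0, hv1⟩ := hV X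
  rcases grStep_cases (R := R) V X with ⟨hm, he⟩ | ⟨hm, he⟩ <;> rw [hs] at he
  · exfalso; nlinarith [mul_nonneg hv0 (by linarith : (0:ℝ) ≤ 1 - attMax R V X)]
  · have hvx : V X = 0 := le_antisymm
      (by nlinarith [mul_nonneg (by linarith : (0:ℝ) ≤ 1 - V X) (by linarith : (0:ℝ) ≤ 1 - attMax R V X)]) hv0
    rw [hvx] at he
    exact ⟨hvx, by linarith⟩

lemma grStep_half {V : S → ℝ} (hV : ∀ Y, V Y ∈ Set.Icc (0:ℝ) 1) (X : S) {d : ℝ}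
    (hvd : |V X - 1/2| ≤ d) (hmd : |attMax R V X - 1/2| ≤ d) :
    |grStep R V X - 1/2| ≤ (1/2 + d) * d := by
  obtain ⟨hv0, hv1⟩ := hV X
  have hd0 : 0 ≤ d := le_trans (abs_nonneg _) hvd
  obtain ⟨hvl, hvr⟩ := abs_le.1 hvd
  rcases grStep_cases (R := R) V X with ⟨hm, he⟩ | ⟨hm, he⟩ <;> rw [he]
  · have e2 : (1 - V X) * (1/2) + V X * (1 - attMax R V X) - 1/2
        = V X * (1/2 - attMax R V X) := by ring
    rw [e2, abs_mul]
    have h1 : |V X| ≤ 1/2 + d := by rw [abs_of_nonneg hv0]; linarith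
    have h2 : |1/2 - attMax R V X| ≤ d := by rw [abs_sub_comm]; exact hmd
    exact mul_le_mul h1 h2 (abs_nonneg _) (by linarith)
  · have e2 : (1 - V X) * (1 - attMax R V X) + V X * (1/2) - 1/2
        = (1 - V X) * (1/2 - attMax R V X) := by ring
    rw [e2, abs_mul]
    have h1 : |1 - V X| ≤ 1/2 + d := by rw [abs_of_nonneg (by linarith)]; linarith
    have h2 : |1/2 - attMax R V X| ≤ d := by rw [abs_sub_comm]; exact hmd
    exact mul_le_mul h1 h2 (abs_nonneg _) (by linarith)

end aux

lemma tendsto_rec (a ε : ℕ → ℝ) (ha0 : ∀ i, 0 ≤ a i) (ha1 : ∀ i, a i ≤ 1)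
    (hrec : ∀ i, a (i+1) ≤ a i / 2 + ε i) (hε : Tendsto ε atTop (𝓝 0)) :
    Tendsto a atTop (𝓝 0) := by
  rw [Metric.tendsto_atTop] at hε ⊢
  intro δ hδ
  obtain ⟨N1, hN1⟩ := hε (δ/4) (by linarith)
  have hεlt : ∀ i, N1 ≤ i → ε i < δ/4 := by
    intro i hi
    have := hN1 i hi
    rw [Real.dist_eq, sub_zero] at this
    exact (abs_lt.1 this).2
  have key : ∀ k, a (N1 + k) ≤ (1/2:ℝ)^k + δ/2 := by
    intro k
    induction k with
    | zero =>
      simp only [pow_zero]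
      have := ha1 (N1 + 0)
      linarith
    | succ k ih =>
      have h1 := hrec (N1 + k)
      have h2 := hεlt (N1 + k) (Nat.le_add_right _ _)
      have h3 : N1 + (k+1) = (N1 + k) + 1 := rfl
      rw [h3]
      calc a ((N1+k)+1) ≤ a (N1+k)/2 + ε (N1+k) := h1
        _ ≤ ((1/2:ℝ)^k + δ/2)/2 + δ/4 := by linarith
        _ = (1/2:ℝ)^(k+1) + δ/2 := by ring
  obtain ⟨k0, hk0⟩ : ∃ k0 : ℕ, (1/2:ℝ)^k0 < δ/2 :=
    exists_pow_lt_of_lt_one (by linarith) (by norm_num)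
  refine ⟨N1 + k0, fun i hi => ?_⟩
  have hik : i = N1 + (k0 + (i - (N1+k0))) := by omega
  rw [Real.dist_eq, sub_zero, abs_of_nonneg (ha0 i)]
  calc a i = a (N1 + (k0 + (i - (N1+k0)))) := by rw [← hik]
    _ ≤ (1/2:ℝ)^(k0 + (i-(N1+k0))) + δ/2 := key _
    _ ≤ (1/2:ℝ)^k0 + δ/2 := by
        have := pow_le_pow_of_le_one (by norm_num : (0:ℝ) ≤ 1/2) (by norm_num) (Nat.le_add_right k0 (i-(N1+k0)))
        linarith
    _ < δ := by linarith

def chainGR (R : S → S → Prop) (I : Set S) : ℕ → Set S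
  | 0 => I
  | n+1 => chainGR R I n ∪ {X | acceptable R (chainGR R I n) X}

lemma chainGR_succ (R : S → S → Prop) (I : Set S) (n : ℕ) :
    chainGR R I (n+1) = chainGR R I n ∪ {X | acceptable R (chainGR R I n) X} := rfl

lemma acceptable_mono {R : S → S → Prop} {T T' : Set S} (hTT : T ⊆ T') {X : S}
    (hX : acceptable R T X) : acceptable R T' X :=
  fun Y hY => let ⟨Z, hZ, hZY⟩ := hX Y hY; ⟨Z, hTT hZ, hZY⟩

lemma chainGR_mono_succ {R : S → S → Prop} {I : Set S} (n : ℕ) :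
    chainGR R I n ⊆ chainGR R I (n+1) := Set.subset_union_left

lemma chainGR_mono {R : S → S → Prop} {I : Set S} {m k : ℕ} (hmk : m ≤ k) :
    chainGR R I m ⊆ chainGR R I k := by
  induction k with
  | zero => rw [Nat.le_zero.1 hmk]
  | succ k ih =>
    rcases Nat.eq_or_lt_of_le hmk with rfl | hlt
    · rfl
    · exact (ih (Nat.lt_succ_iff.1 hlt)).trans (chainGR_mono_succ k)

lemma chainGR_admissible {R : S → S → Prop} {I : Set S} (hI : admissible R I) (n : ℕ) :
    admissible R (chainGR R I n) := by
  induction n with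
  | zero => exact hI
  | succ n ih =>
    rw [chainGR_succ]
    have hacc : ∀ X ∈ chainGR R I n ∪ {X | acceptable R (chainGR R I n) X},
        acceptable R (chainGR R I n) X := fun X hX => hX.elim (ih.2 X) id
    constructor
    · intro X hX Y hY hR
      obtain ⟨Z, hZ, hZX⟩ := hacc Y hY X hR
      obtain ⟨W, hW, hWZ⟩ := hacc X hX Z hZX
      exact ih.1 W hW Z hZ hWZ
    · exact fun X hX => acceptable_mono Set.subset_union_left (hacc X hX)

lemma chainGR_subset_complete {R : S → S → Prop} {I : Set S} {E' : Set S}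
    (hE' : completeExt R E') (hIE : I ⊆ E') (n : ℕ) : chainGR R I n ⊆ E' := by
  induction n with
  | zero => exact hIE
  | succ n ih =>
    rw [chainGR_succ]
    exact Set.union_subset ih (fun X hX => hE'.2 X (acceptable_mono ih hX))

lemma chainGR_stab [Fintype S] (R : S → S → Prop) (I : Set S) :
    ∃ n, chainGR R I (n+1) = chainGR R I n := by
  by_contra hc
  push_neg at hc
  have key : ∀ n, n ≤ (chainGR R I n).ncard := by
    intro n
    induction n with
    | zero => exact Nat.zero_le _
    | succ n ih =>
      have hss : chainGR R I n ⊂ chainGR R I (n+1) :=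
        (chainGR_mono_succ n).ssubset_of_ne (Ne.symm (hc n))
      have := Set.ncard_lt_ncard hss (Set.toFinite _)
      omega
  have h1 := key (Fintype.card S + 1)
  have h2 : (chainGR R I (Fintype.card S + 1)).ncard ≤ Fintype.card S := by
    have := Set.ncard_le_ncard (Set.subset_univ (chainGR R I (Fintype.card S + 1))) (Set.toFinite _)
    simpa [Set.ncard_univ, Nat.card_eq_fintype_card] using this
  omega

theorem stmt0 [Fintype S] [Nonempty S] (R : S → S → Prop) [DecidableRel R]
    (V0 : S → ℝ) (hV0 : ∀ X, V0 X ∈ Set.Icc (0:ℝ) 1)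
    (h : S → ℝ) (hh : ∀ X, h X ∈ Set.Icc (0:ℝ) 1)
    (hin : inSet h ⊆ inSet V0) (hout : outSet h ⊆ outSet V0)
    (h1 : ∀ X, h X = 1 → ∀ Y, R Y X → h Y = 0)
    (h0 : ∀ X, h X = 0 → ∃ Y, R Y X ∧ h Y = 1)
    (hmax : ∀ g : S → ℝ, (∀ X, g X ∈ Set.Icc (0:ℝ) 1) →
      inSet g ⊆ inSet V0 → outSet g ⊆ outSet V0 →
      (∀ X, g X = 1 → ∀ Y, R Y X → g Y = 0) →
      (∀ X, g X = 0 → ∃ Y, R Y X ∧ g Y = 1) →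
      inSet g ⊆ inSet h ∧ outSet g ⊆ outSet h) :
    ∃ E : Set S, completeExt R E ∧ inSet h ⊆ E ∧ outSet h ⊆ plusSet R E ∧
      (∀ E' : Set S, completeExt R E' → inSet h ⊆ E' → outSet h ⊆ plusSet R E' → E ⊆ E') ∧
      (∀ X : S,
        (X ∈ E → Tendsto (fun i => grSeq R V0 i X) atTop (nhds 1)) ∧
        (X ∈ plusSet R E → Tendsto (fun i => grSeq R V0 i X) atTop (nhds 0)) ∧
        (X ∉ E → X ∉ plusSet R E →
          Tendsto (fun i => grSeq R V0 i X) atTop (nhds (1/2)))) := by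
  classical
  -- values stay in [0,1]
  have hmem : ∀ i (X : S), grSeq R V0 i X ∈ Set.Icc (0:ℝ) 1 := by
    intro i
    induction i with
    | zero => exact hV0
    | succ i ih => exact fun X => (grStep_bounds ih X).1
  -- persistence of h's crisp values
  have hpers : ∀ i, (∀ X, h X = 1 → grSeq R V0 i X = 1) ∧
      (∀ X, h X = 0 → grSeq R V0 i X = 0) := by
    intro i
    induction i with
    | zero => exact ⟨fun X hX => hin hX, fun X hX => hout hX⟩
    | succ i ih =>
      constructor
      · intro X hX
        have hm : attMax R (grSeq R V0 i) X = 0 :=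
          le_antisymm (attMax_le le_rfl (fun Y hY => (ih.2 Y (h1 X hX Y hY)).le))
            (attMax_nonneg _ _)
        show grStep R (grSeq R V0 i) X = 1
        rw [grStep, hm, ih.1 X hX]
        norm_num
      · intro X hX
        obtain ⟨Y, hYX, hY1⟩ := h0 X hX
        have hm : attMax R (grSeq R V0 i) X = 1 := by
          refine le_antisymm (attMax_le zero_le_one fun Z _ => (hmem i Z).2) ?_
          have := le_attMax (V := grSeq R V0 i) hYX
          rwa [ih.1 Y hY1] at this
        show grStep R (grSeq R V0 i) X = 0
        rw [grStep, hm, ih.2 X hX]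
        norm_num
  -- crisp values can only be lost, never gained
  have hstepone : ∀ i (X : S), grSeq R V0 (i+1) X = 1 →
      grSeq R V0 i X = 1 ∧ attMax R (grSeq R V0 i) X = 0 :=
    fun i X hx => grStep_eq_one (hmem i) hx
  have hstepzero : ∀ i (X : S), grSeq R V0 (i+1) X = 0 →
      grSeq R V0 i X = 0 ∧ attMax R (grSeq R V0 i) X = 1 :=
    fun i X hx => grStep_eq_zero (hmem i) hx
  have hdown1 : ∀ (X : S) i j, i ≤ j → grSeq R V0 j X = 1 → grSeq R V0 i X = 1 := by
    intro X i j hij hj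
    induction j with
    | zero => rw [Nat.le_zero.1 hij]; exact hj
    | succ j ih =>
      rcases Nat.eq_or_lt_of_le hij with rfl | hlt
      · exact hj
      · exact ih (Nat.lt_succ_iff.1 hlt) (hstepone j X hj).1
  have hdown0 : ∀ (X : S) i j, i ≤ j → grSeq R V0 j X = 0 → grSeq R V0 i X = 0 := by
    intro X i j hij hj
    induction j with
    | zero => rw [Nat.le_zero.1 hij]; exact hj
    | succ j ih =>
      rcases Nat.eq_or_lt_of_le hij with rfl | hlt
      · exact hj
      · exact ih (Nat.lt_succ_iff.1 hlt) (hstepzero j X hj).1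
  -- eventual stabilization of crisp values
  have hev : ∀ᶠ i in atTop, ∀ X : S,
      (grSeq R V0 i X = 1 → ∀ j, grSeq R V0 j X = 1) ∧
      (grSeq R V0 i X = 0 → ∀ j, grSeq R V0 j X = 0) := by
    rw [eventually_all]
    intro X
    have e1 : ∀ᶠ i in atTop, (grSeq R V0 i X = 1 → ∀ j, grSeq R V0 j X = 1) := by
      by_cases hX : ∀ j, grSeq R V0 j X = 1
      · exact Eventually.of_forall fun i _ => hX
      · push_neg at hX
        obtain ⟨j0, hj0⟩ := hX
        exact eventually_atTop.2 ⟨j0, fun i hi hone => absurd (hdown1 X j0 i hi hone) hj0⟩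
    have e0 : ∀ᶠ i in atTop, (grSeq R V0 i X = 0 → ∀ j, grSeq R V0 j X = 0) := by
      by_cases hX : ∀ j, grSeq R V0 j X = 0
      · exact Eventually.of_forall fun i _ => hX
      · push_neg at hX
        obtain ⟨j0, hj0⟩ := hX
        exact eventually_atTop.2 ⟨j0, fun i hi hz => absurd (hdown0 X j0 i hi hz) hj0⟩
    exact e1.and e0
  -- the maximal persistent crisp labelling g
  have hdisj : ∀ X : S, (∀ j, grSeq R V0 j X = 1) → (∀ j, grSeq R V0 j X = 0) → False := by
    intro X hA hB
    have := hA 0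
    rw [hB 0] at this
    norm_num at this
  set g : S → ℝ := fun X => if (∀ j, grSeq R V0 j X = 1) then 1 else
    (if (∀ j, grSeq R V0 j X = 0) then 0 else 1/2) with hgdef
  have hg1 : ∀ X, g X = 1 ↔ ∀ j, grSeq R V0 j X = 1 := by
    intro X
    simp only [hgdef]
    split_ifs with hA hB
    · exact iff_of_true rfl hA
    · exact iff_of_false (by norm_num) hA
    · exact iff_of_false (by norm_num) hA
  have hg0 : ∀ X, g X = 0 ↔ ∀ j, grSeq R V0 j X = 0 := by
    intro X
    simp only [hgdef]
    split_ifs with hA hB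
    · exact iff_of_false (by norm_num) (fun hB' => hdisj X hA hB')
    · exact iff_of_true rfl hB
    · exact iff_of_false (by norm_num) hB
  have hgIcc : ∀ X, g X ∈ Set.Icc (0:ℝ) 1 := by
    intro X
    simp only [hgdef]
    split_ifs <;> norm_num
  have hgleg1 : ∀ X, g X = 1 → ∀ Y, R Y X → g Y = 0 := by
    intro X hX Y hY
    rw [hg1] at hX
    rw [hg0]
    intro j
    have hm := (hstepone j X (hX (j+1))).2
    have hle := le_attMax (V := grSeq R V0 j) hY
    rw [hm] at hle
    exact le_antisymm hle (hmem j Y).1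
  have hgleg0 : ∀ X, g X = 0 → ∃ Y, R Y X ∧ g Y = 1 := by
    intro X hX
    rw [hg0] at hX
    obtain ⟨i0, hi0⟩ := eventually_atTop.1 hev
    have hm := (hstepzero i0 X (hX (i0+1))).2
    have hge : (1:ℝ) ≤ attMax R (grSeq R V0 i0) X := hm.ge
    rw [attMax] at hge
    rcases (Finset.le_fold_max _).1 hge with hb | ⟨Y, hYm, hY1⟩
    · norm_num at hb
    · have hYR : R Y X := (Finset.mem_filter.1 hYm).2
      have hYone : grSeq R V0 i0 Y = 1 := le_antisymm (hmem i0 Y).2 hY1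
      exact ⟨Y, hYR, (hg1 Y).2 ((hi0 i0 le_rfl Y).1 hYone)⟩
  have hgV0in : inSet g ⊆ inSet V0 := fun X hX => ((hg1 X).1 hX) 0
  have hgV0out : outSet g ⊆ outSet V0 := fun X hX => ((hg0 X).1 hX) 0
  obtain ⟨hgh_in, hgh_out⟩ := hmax g hgIcc hgV0in hgV0out hgleg1 hgleg0
  have hchar1 : ∀ X, h X = 1 ↔ ∀ j, grSeq R V0 j X = 1 :=
    fun X => ⟨fun hX j => (hpers j).1 X hX, fun hX => hgh_in ((hg1 X).2 hX)⟩
  have hchar0 : ∀ X, h X = 0 ↔ ∀ j, grSeq R V0 j X = 0 :=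
    fun X => ⟨fun hX j => (hpers j).2 X hX, fun hX => hgh_out ((hg0 X).2 hX)⟩
  -- the least complete extension containing inSet h
  have hIadm : admissible R (inSet h) := by
    constructor
    · intro X hX Y hY hR
      have hX0 := h1 Y hY X hR
      rw [hX] at hX0
      norm_num at hX0
    · intro X hX Y hY
      obtain ⟨Z, hZY, hZ1⟩ := h0 Y (h1 X hX Y hY)
      exact ⟨Z, hZ1, hZY⟩
  obtain ⟨n, hn⟩ := chainGR_stab R (inSet h)
  have hEcomp : completeExt R (chainGR R (inSet h) n) := by
    refine ⟨chainGR_admissible hIadm n, fun X hacc => ?_⟩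
    have hXn : X ∈ chainGR R (inSet h) (n+1) := by
      rw [chainGR_succ]
      exact Or.inr hacc
    rwa [hn] at hXn
  -- convergence helpers
  have tendZero : ∀ X Z : S, R Z X →
      Tendsto (fun i => grSeq R V0 i Z) atTop (𝓝 1) →
      Tendsto (fun i => grSeq R V0 i X) atTop (𝓝 0) := by
    intro X Z hZX hZ
    refine tendsto_rec (fun i => grSeq R V0 i X) (fun i => 1 - grSeq R V0 i Z)
      (fun i => (hmem i X).1) (fun i => (hmem i X).2) ?_ ?_
    · intro i
      have hb := (grStep_bounds (R := R) (hmem i) X).2.1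
      have hle := le_attMax (R := R) (V := grSeq R V0 i) hZX
      show grStep R (grSeq R V0 i) X ≤ grSeq R V0 i X / 2 + (1 - grSeq R V0 i Z)
      linarith
    · have := Tendsto.const_sub (1:ℝ) hZ
      simpa using this
  have tendOne : ∀ X : S,
      (∀ Y, R Y X → Tendsto (fun i => grSeq R V0 i Y) atTop (𝓝 0)) →
      Tendsto (fun i => grSeq R V0 i X) atTop (𝓝 1) := by
    intro X hatt
    have hmt : Tendsto (fun i => attMax R (grSeq R V0 i) X) atTop (𝓝 0) := by
      have hsum : Tendsto
          (fun i => ∑ Y ∈ Finset.univ.filter (fun Y => R Y X), grSeq R V0 i Y)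
          atTop (𝓝 0) := by
        have := tendsto_finset_sum (Finset.univ.filter (fun Y => R Y X))
          (fun Y hY => hatt Y ((Finset.mem_filter.1 hY).2))
        simpa using this
      refine squeeze_zero (fun i => attMax_nonneg _ _) (fun i => ?_) hsum
      refine attMax_le (Finset.sum_nonneg fun Y _ => (hmem i Y).1) ?_
      intro Y hY
      exact Finset.single_le_sum (f := fun Z => grSeq R V0 i Z)
        (fun Z _ => (hmem i Z).1) (by simp [hY])
    have ha : Tendsto (fun i => 1 - grSeq R V0 i X) atTop (𝓝 0) := by
      refine tendsto_rec (fun i => 1 - grSeq R V0 i X)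
        (fun i => attMax R (grSeq R V0 i) X) ?_ ?_ ?_ hmt
      · intro i
        have := (hmem i X).2
        show (0:ℝ) ≤ 1 - grSeq R V0 i X
        linarith
      · intro i
        have := (hmem i X).1
        show 1 - grSeq R V0 i X ≤ 1
        linarith
      · intro i
        have hb := (grStep_bounds (R := R) (hmem i) X).2.2
        show 1 - grStep R (grSeq R V0 i) X ≤ (1 - grSeq R V0 i X)/2 + attMax R (grSeq R V0 i) X
        linarith
    have := Tendsto.const_sub (1:ℝ) ha
    simpa using this
  have Ptend : ∀ m, ∀ X ∈ chainGR R (inSet h) m,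
      Tendsto (fun i => grSeq R V0 i X) atTop (𝓝 1) := by
    intro m
    induction m with
    | zero =>
      intro X hX
      have hc : ∀ i, grSeq R V0 i X = 1 := fun i => (hpers i).1 X hX
      exact (tendsto_congr fun i => (hc i).symm).1 tendsto_const_nhds
    | succ m ih =>
      intro X hX
      rw [chainGR_succ] at hX
      rcases hX with hX | hX
      · exact ih X hX
      · refine tendOne X fun Y hY => ?_
        obtain ⟨Z, hZ, hZY⟩ := hX Y hY
        exact tendZero Y Z hZY (ih Z hZ)
  refine ⟨chainGR R (inSet h) n, hEcomp, chainGR_mono (Nat.zero_le n), ?_, ?_, ?_⟩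
  · intro X hX
    obtain ⟨Y, hYX, hY1⟩ := h0 X hX
    exact ⟨Y, chainGR_mono (Nat.zero_le n) hY1, hYX⟩
  · intro E' hE' hinE' _
    exact chainGR_subset_complete hE' hinE' n
  · intro X
    refine ⟨fun hX => Ptend n X hX, ?_, ?_⟩
    · rintro ⟨Z, hZ, hZX⟩
      exact tendZero X Z hZX (Ptend n Z hZ)
    · intro hXE hXP
      set U : Finset S := Finset.univ.filter
        (fun Y => Y ∉ chainGR R (inSet h) n ∧ Y ∉ plusSet R (chainGR R (inSet h) n)) with hU
      have hXU : X ∈ U := by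
        rw [hU, Finset.mem_filter]
        exact ⟨Finset.mem_univ X, hXE, hXP⟩
      set d : ℕ → ℝ := fun i => U.fold max 0 (fun Y => |grSeq R V0 i Y - 1/2|) with hd
      have hd0 : ∀ i, 0 ≤ d i := fun i => (Finset.le_fold_max _).2 (Or.inl le_rfl)
      have hdX : ∀ i, ∀ Y ∈ U, |grSeq R V0 i Y - 1/2| ≤ d i :=
        fun i Y hY => (Finset.le_fold_max _).2 (Or.inr ⟨Y, hY, le_rfl⟩)
      have hplus_half : ∀ᶠ i in atTop, ∀ Z : S,
          Z ∈ plusSet R (chainGR R (inSet h) n) → grSeq R V0 i Z ≤ 1/2 := by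
        rw [eventually_all]
        intro Z
        by_cases hZ : Z ∈ plusSet R (chainGR R (inSet h) n)
        · obtain ⟨W, hW, hWZ⟩ := hZ
          have ht := tendZero Z W hWZ (Ptend n W hW)
          exact (ht.eventually_lt_const (by norm_num : (0:ℝ) < 1/2)).mono
            (fun i hi _ => hi.le)
        · exact Eventually.of_forall fun i hZ' => absurd hZ' hZ
      obtain ⟨i1, hi1⟩ := eventually_atTop.1 (hplus_half.and hev)
      have hUopen : ∀ i, i1 ≤ i → ∀ Y ∈ U, grSeq R V0 i Y ≠ 1 ∧ grSeq R V0 i Y ≠ 0 := by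
        intro i hi Y hYU
        have hstab := (hi1 i hi).2 Y
        rw [hU, Finset.mem_filter] at hYU
        obtain ⟨-, hYE, hYP⟩ := hYU
        constructor
        · intro hone
          have hhY : h Y = 1 := (hchar1 Y).2 (hstab.1 hone)
          exact hYE (chainGR_mono (Nat.zero_le n) hhY)
        · intro hzero
          have hhY : h Y = 0 := (hchar0 Y).2 (hstab.2 hzero)
          obtain ⟨W, hWY, hW1⟩ := h0 Y hhY
          exact hYP ⟨W, chainGR_mono (Nat.zero_le n) hW1, hWY⟩
      have hdlt : d i1 < 1/2 := by
        rw [hd]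
        refine (Finset.fold_max_lt _).2 ⟨by norm_num, fun Y hY => ?_⟩
        obtain ⟨hne1, hne0⟩ := hUopen i1 le_rfl Y hY
        obtain ⟨hge, hle⟩ := hmem i1 Y
        have hlt1 : grSeq R V0 i1 Y < 1 := lt_of_le_of_ne hle hne1
        have hgt0 : 0 < grSeq R V0 i1 Y := lt_of_le_of_ne hge (Ne.symm hne0)
        rw [abs_lt]
        constructor <;> linarith
      have hc0 : 0 ≤ d i1 := hd0 i1
      have hq1 : 1/2 + d i1 < 1 := by linarith
      have hq0 : (0:ℝ) ≤ 1/2 + d i1 := by linarith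
      have key : ∀ i, i1 ≤ i → d i ≤ d i1 → d (i+1) ≤ (1/2 + d i1) * d i := by
        intro i hi hdc
        rw [hd]
        refine (Finset.fold_max_le _).2 ⟨mul_nonneg hq0 (hd0 i), fun Y hYU => ?_⟩
        have hYU' := hYU
        rw [hU, Finset.mem_filter] at hYU'
        obtain ⟨-, hYE, hYP⟩ := hYU'
        have hup : attMax R (grSeq R V0 i) Y ≤ 1/2 + d i := by
          refine attMax_le (by linarith [hd0 i]) ?_
          intro Z hZY
          have hZnotE : Z ∉ chainGR R (inSet h) n := fun hZ => hYP ⟨Z, hZ, hZY⟩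
          by_cases hZp : Z ∈ plusSet R (chainGR R (inSet h) n)
          · have := (hi1 i hi).1 Z hZp
            linarith [hd0 i]
          · have hZU : Z ∈ U := by
              rw [hU, Finset.mem_filter]
              exact ⟨Finset.mem_univ Z, hZnotE, hZp⟩
            have := (abs_le.1 (hdX i Z hZU)).2
            linarith
        have hlow : 1/2 - d i ≤ attMax R (grSeq R V0 i) Y := by
          have hnacc : ¬ acceptable R (chainGR R (inSet h) n) Y :=
            fun hacc => hYE (hEcomp.2 Y hacc)
          rw [acceptable] at hnacc
          push_neg at hnacc
          obtain ⟨W, hWY, hWnp⟩ := hnacc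
          have hWnotP : W ∉ plusSet R (chainGR R (inSet h) n) := by
            rintro ⟨Z, hZ, hZW⟩
            exact hWnp Z hZ hZW
          have hWnotE : W ∉ chainGR R (inSet h) n := fun hW => hYP ⟨W, hW, hWY⟩
          have hWU : W ∈ U := by
            rw [hU, Finset.mem_filter]
            exact ⟨Finset.mem_univ W, hWnotE, hWnotP⟩
          have hWb := (abs_le.1 (hdX i W hWU)).1
          have hWa := le_attMax (V := grSeq R V0 i) hWY
          linarith
        have hmd : |attMax R (grSeq R V0 i) Y - 1/2| ≤ d i :=
          abs_le.2 ⟨by linarith, by linarith⟩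
        have hb := grStep_half (R := R) (hmem i) Y (hdX i Y hYU) hmd
        have hgr : grSeq R V0 (i+1) Y = grStep R (grSeq R V0 i) Y := rfl
        rw [hgr]
        calc |grStep R (grSeq R V0 i) Y - 1/2| ≤ (1/2 + d i) * d i := hb
          _ ≤ (1/2 + d i1) * d i :=
            mul_le_mul_of_nonneg_right (by linarith) (hd0 i)
      have geom : ∀ k, d (i1 + k) ≤ (1/2 + d i1)^k * d i1 := by
        intro k
        induction k with
        | zero => simp
        | succ k ih =>
          have hpow : (1/2 + d i1)^k ≤ 1 := pow_le_one₀ hq0 hq1.le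
          have hdc : d (i1 + k) ≤ d i1 := le_trans ih (by nlinarith)
          have hk := key (i1 + k) (Nat.le_add_right _ _) hdc
          have hidx : i1 + (k+1) = (i1 + k) + 1 := rfl
          rw [hidx]
          calc d ((i1+k)+1) ≤ (1/2 + d i1) * d (i1+k) := hk
            _ ≤ (1/2 + d i1) * ((1/2 + d i1)^k * d i1) :=
              mul_le_mul_of_nonneg_left ih hq0
            _ = (1/2 + d i1)^(k+1) * d i1 := by ring
      have hdt : Tendsto d atTop (𝓝 0) := by
        rw [← tendsto_add_atTop_iff_nat i1]
        have hg0' : Tendsto (fun k => (1/2 + d i1)^k * d i1) atTop (𝓝 0) := by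
          have := (tendsto_pow_atTop_nhds_zero_of_lt_one hq0 hq1).mul_const (d i1)
          simpa using this
        refine squeeze_zero (fun k => hd0 _) (fun k => ?_) hg0'
        rw [add_comm]
        exact geom k
      rw [tendsto_iff_dist_tendsto_zero]
      refine squeeze_zero (fun i => dist_nonneg) (fun i => ?_) hdt
      rw [Real.dist_eq]
      exact hdX i X hXU
end

section
/- Let (S,R) be an argumentation network and g an argumentation-friendly function. If V : S → [0,1] satisfies, for every X ∈ S, V(X) = g applied to the finite multiset {1 − V(Y) : Y ∈ Att(X)}, then in(V) = {X ∈ S | V(X) = 1} is a complete extension of (S,R). -/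
open Filter Topology

variable {S : Type*}

theorem stmt2 [Fintype S] [Nonempty S] (R : S → S → Prop) [DecidableRel R]
    (g : Multiset ℝ → ℝ)
    (hrange : ∀ Δ : Multiset ℝ, (∀ x ∈ Δ, x ∈ Set.Icc (0:ℝ) 1) → g Δ ∈ Set.Icc (0:ℝ) 1)
    (hT1 : g 0 = 1)
    (hT2 : ∀ Δ : Multiset ℝ, (∀ x ∈ Δ, x ∈ Set.Icc (0:ℝ) 1) → g ((1:ℝ) ::ₘ Δ) = g Δ)
    (hT4 : ∀ Δ : Multiset ℝ, (∀ x ∈ Δ, x ∈ Set.Icc (0:ℝ) 1) → (g Δ = 0 ↔ (0:ℝ) ∈ Δ))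
    (hT5 : ∀ Δ : Multiset ℝ, (∀ x ∈ Δ, x ∈ Set.Icc (0:ℝ) 1) → (g Δ = 1 ↔ ∀ x ∈ Δ, x = 1))
    (V : S → ℝ) (hV : ∀ X, V X ∈ Set.Icc (0:ℝ) 1)
    (heq : ∀ X : S,
      V X = g ((Finset.univ.filter (fun Y => R Y X)).val.map (fun Y => 1 - V Y))) :
    completeExt R (inSet V) := by
  have hΔ : ∀ X : S, ∀ x ∈ (Finset.univ.filter (fun Y => R Y X)).val.map (fun Y => 1 - V Y),
      x ∈ Set.Icc (0:ℝ) 1 := by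
    intro X x hx
    obtain ⟨Y, _, rfl⟩ := Multiset.mem_map.mp hx
    have h1 := (hV Y).1
    have h2 := (hV Y).2
    exact ⟨by linarith, by linarith⟩
  have hone : ∀ X : S, V X = 1 ↔ ∀ Y, R Y X → V Y = 0 := by
    intro X
    rw [heq X, hT5 _ (hΔ X)]
    constructor
    · intro h Y hY
      have := h (1 - V Y) (Multiset.mem_map.mpr ⟨Y, by simp [hY], rfl⟩)
      linarith
    · intro h x hx
      obtain ⟨Y, hY, rfl⟩ := Multiset.mem_map.mp hx
      have : R Y X := by simpa using hY
      have := h Y this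
      linarith
  have hzero : ∀ X : S, V X = 0 ↔ ∃ Y, R Y X ∧ V Y = 1 := by
    intro X
    rw [heq X, hT4 _ (hΔ X)]
    constructor
    · intro h
      obtain ⟨Y, hY, h0⟩ := Multiset.mem_map.mp h
      exact ⟨Y, by simpa using hY, by linarith⟩
    · rintro ⟨Y, hY, h1⟩
      exact Multiset.mem_map.mpr ⟨Y, by simp [hY], by linarith⟩
  refine ⟨⟨?_, ?_⟩, ?_⟩
  · intro X hX Y hY hR
    have h0 := (hone Y).mp hY X hR
    rw [hX] at h0
    norm_num at h0
  · intro X hX Y hR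
    have hY0 : V Y = 0 := (hone X).mp hX Y hR
    obtain ⟨Z, hZR, hZ1⟩ := (hzero Y).mp hY0
    exact ⟨Z, hZ1, hZR⟩
  · intro X hX
    apply (hone X).mpr
    intro Y hR
    obtain ⟨Z, hZ, hZR⟩ := hX Y hR
    exact (hzero Y).mpr ⟨Z, hZR, hZ⟩
end

section
/- Let (S,R) be an argumentation network and E a complete extension of (S,R). Define V : S → [0,1] by V(X) = 1 if X ∈ E, V(X) = 0 if E → X, and V(X) = 1/2 otherwise. Then V solves the Eq_max system of equations: for every X ∈ S, V(X) = 1 − max_{Y ∈ Att(X)} V(Y), with the convention that the maximum over the empty set is 0. -/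
open Filter Topology

variable {S : Type*}

theorem stmt4 [Fintype S] [Nonempty S] (R : S → S → Prop) [DecidableRel R]
    (E : Set S) (hE : completeExt R E)
    (V : S → ℝ)
    (hV1 : ∀ X ∈ E, V X = 1)
    (hV0 : ∀ X ∈ plusSet R E, V X = 0)
    (hVu : ∀ X : S, X ∉ E → X ∉ plusSet R E → V X = 1/2) :
    ∀ X : S, V X = 1 - attMax R V X := by
  intro X
  obtain ⟨⟨hcf, hadm⟩, hcomp⟩ := hE
  have hVle : ∀ Y : S, V Y ≤ 1 := by
    intro Y
    by_cases h1 : Y ∈ E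
    · rw [hV1 Y h1]
    by_cases h2 : Y ∈ plusSet R E
    · rw [hV0 Y h2]; norm_num
    · rw [hVu Y h1 h2]; norm_num
  by_cases hX : X ∈ E
  · rw [hV1 X hX]
    have : attMax R V X = 0 := by
      unfold attMax
      have h := Finset.fold_max_le (b := 0) (f := V)
        (s := Finset.univ.filter (fun Y => R Y X)) (c := (0:ℝ))
      have hle : (Finset.univ.filter (fun Y => R Y X)).fold max 0 V ≤ 0 := by
        rw [h]
        refine ⟨le_refl _, ?_⟩
        intro Y hY
        simp only [Finset.mem_filter] at hY
        obtain ⟨Z, hZ, hZY⟩ := hadm X hX Y hY.2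
        have : Y ∈ plusSet R E := ⟨Z, hZ, hZY⟩
        rw [hV0 Y this]
      have hge : (0:ℝ) ≤ (Finset.univ.filter (fun Y => R Y X)).fold max 0 V :=
        (Finset.le_fold_max _).mpr (Or.inl le_rfl)
      linarith
    rw [this]; norm_num
  by_cases hXp : X ∈ plusSet R E
  · rw [hV0 X hXp]
    have : attMax R V X = 1 := by
      unfold attMax
      obtain ⟨Z, hZ, hZX⟩ := hXp
      have hge : (1:ℝ) ≤ (Finset.univ.filter (fun Y => R Y X)).fold max 0 V := by
        refine (Finset.le_fold_max _).mpr (Or.inr ⟨Z, ?_, ?_⟩)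
        · simp [hZX]
        · rw [hV1 Z hZ]
      have hle : (Finset.univ.filter (fun Y => R Y X)).fold max 0 V ≤ 1 := by
        rw [Finset.fold_max_le]
        exact ⟨by norm_num, fun x _ => hVle x⟩
      linarith
    rw [this]; norm_num
  · rw [hVu X hX hXp]
    have hnacc : ¬ acceptable R E X := fun h => hX (hcomp X h)
    have : attMax R V X = 1/2 := by
      unfold attMax
      unfold acceptable at hnacc; push_neg at hnacc
      obtain ⟨Y, hYX, hY⟩ := hnacc
      have hYE : Y ∉ E := by
        intro hYE
        exact hXp ⟨Y, hYE, hYX⟩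
      have hYp : Y ∉ plusSet R E := by
        rintro ⟨Z, hZ, hZY⟩
        exact (hY Z hZ) hZY
      have hge : (1/2:ℝ) ≤ (Finset.univ.filter (fun W => R W X)).fold max 0 V := by
        refine (Finset.le_fold_max _).mpr (Or.inr ⟨Y, ?_, ?_⟩)
        · simp [hYX]
        · rw [hVu Y hYE hYp]
      have hle : (Finset.univ.filter (fun W => R W X)).fold max 0 V ≤ 1/2 := by
        rw [Finset.fold_max_le]
        refine ⟨by norm_num, fun W hW => ?_⟩
        simp only [Finset.mem_filter] at hW
        have hWE : W ∉ E := by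
          intro hWE; exact hXp ⟨W, hWE, hW.2⟩
        by_cases hWp : W ∈ plusSet R E
        · rw [hV0 W hWp]; norm_num
        · rw [hVu W hWE hWp]
      linarith
    rw [this]; norm_num
end

section
/- Let (S,R) be an argumentation network and E a complete extension of (S,R). Define V₀ : S → [0,1] by V₀(X) = 1 if X ∈ E, V₀(X) = 0 if E → X, and V₀(X) = 1/2 otherwise. Then the Gabbay-Rodrigues iteration fixes V₀: the assignment V₁ obtained by one GR iteration step from V₀ satisfies V₁(X) = V₀(X) for all X ∈ S. -/
open Filter Topology

variable {S : Type*}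

theorem stmt6 [Fintype S] [Nonempty S] (R : S → S → Prop) [DecidableRel R]
    (E : Set S) (hE : completeExt R E)
    (V0 : S → ℝ)
    (hV1 : ∀ X ∈ E, V0 X = 1)
    (hV0 : ∀ X ∈ plusSet R E, V0 X = 0)
    (hVu : ∀ X : S, X ∉ E → X ∉ plusSet R E → V0 X = 1/2) :
    ∀ X : S, grStep R V0 X = V0 X := by
  classical
  -- trichotomy of values
  have htri : ∀ Y : S, V0 Y = 0 ∨ V0 Y = 1/2 ∨ V0 Y = 1 := by
    intro Y
    by_cases h1 : Y ∈ E
    · exact Or.inr (Or.inr (hV1 Y h1))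
    · by_cases h2 : Y ∈ plusSet R E
      · exact Or.inl (hV0 Y h2)
      · exact Or.inr (Or.inl (hVu Y h1 h2))
  intro X
  by_cases hXE : X ∈ E
  · -- all attackers have value 0
    have hM : attMax R V0 X = 0 := by
      apply le_antisymm
      · rw [attMax, Finset.fold_max_le]
        refine ⟨le_refl 0, ?_⟩
        intro Y hY
        simp only [Finset.mem_filter] at hY
        have hacc := hE.1.2 X hXE Y hY.2
        exact le_of_eq (hV0 Y hacc)
      · rw [attMax, Finset.le_fold_max]
        exact Or.inl (le_refl 0)
    rw [grStep, hM, hV1 X hXE]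
    norm_num
  · by_cases hXP : X ∈ plusSet R E
    · obtain ⟨Z, hZE, hZX⟩ := hXP
      have hM : attMax R V0 X = 1 := by
        apply le_antisymm
        · rw [attMax, Finset.fold_max_le]
          refine ⟨by norm_num, ?_⟩
          intro Y hY
          rcases htri Y with h | h | h <;> rw [h] <;> norm_num
        · rw [attMax, Finset.le_fold_max]
          refine Or.inr ⟨Z, ?_, le_of_eq (hV1 Z hZE).symm⟩
          simp [hZX]
      rw [grStep, hM, hV0 X ⟨Z, hZE, hZX⟩]
      norm_num
    · -- undecided case : M = 1/2
      have hval : V0 X = 1/2 := hVu X hXE hXP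
      have hattval : ∀ Y, R Y X → V0 Y = 0 ∨ V0 Y = 1/2 := by
        intro Y hY
        rcases htri Y with h | h | h
        · exact Or.inl h
        · exact Or.inr h
        · exfalso
          have hYE : Y ∈ E := by
            by_contra hYE
            by_cases h2 : Y ∈ plusSet R E
            · rw [hV0 Y h2] at h; norm_num at h
            · rw [hVu Y hYE h2] at h; norm_num at h
          exact hXP ⟨Y, hYE, hY⟩
      have hexists : ∃ Y, R Y X ∧ V0 Y = 1/2 := by
        by_contra hc
        push_neg at hc
        have hacc : acceptable R E X := by
          intro Y hY
          rcases hattval Y hY with h | h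
          · -- V0 Y = 0 means Y ∈ plusSet
            by_cases h1 : Y ∈ E
            · rw [hV1 Y h1] at h; norm_num at h
            · by_cases h2 : Y ∈ plusSet R E
              · exact h2
              · rw [hVu Y h1 h2] at h; norm_num at h
          · exact absurd h (hc Y hY)
        exact hXE (hE.2 X hacc)
      obtain ⟨Y, hYX, hY2⟩ := hexists
      have hM : attMax R V0 X = 1/2 := by
        apply le_antisymm
        · rw [attMax, Finset.fold_max_le]
          refine ⟨by norm_num, ?_⟩
          intro Z hZ
          simp only [Finset.mem_filter] at hZ
          rcases hattval Z hZ.2 with h | h <;> rw [h] <;> norm_num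
        · rw [attMax, Finset.le_fold_max]
          refine Or.inr ⟨Y, ?_, le_of_eq hY2.symm⟩
          simp [hYX]
      rw [grStep, hM, hval]
      norm_num
end

section
/- Let (S,R) be an argumentation network, V₀ : S → [0,1] an initial assignment, and (V_i) the Gabbay-Rodrigues iteration sequence from V₀. Then for every X ∈ S and every k ≥ 0: (1) if V_k(X) = 0 then V_{k+1}(X) ≠ 1; (2) if V_k(X) = 1 then V_{k+1}(X) ≠ 0; (3) if 0 < V_k(X) < 1 then 0 < V_{k+1}(X) < 1. -/
open Filter Topology

variable {S : Type*}

lemma attMax_mem {S : Type*} [Fintype S] (R : S → S → Prop) [DecidableRel R]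
    (V : S → ℝ) (hV : ∀ X, V X ∈ Set.Icc (0:ℝ) 1) (X : S) :
    attMax R V X ∈ Set.Icc (0:ℝ) 1 := by
  constructor
  · exact (Finset.le_fold_max _).mpr (Or.inl le_rfl)
  · exact (Finset.fold_max_le _).mpr ⟨zero_le_one, fun x _ => (hV x).2⟩

lemma grSeq_mem {S : Type*} [Fintype S] (R : S → S → Prop) [DecidableRel R]
    (V0 : S → ℝ) (hV0 : ∀ X, V0 X ∈ Set.Icc (0:ℝ) 1) (k : ℕ) (X : S) :
    grSeq R V0 k X ∈ Set.Icc (0:ℝ) 1 := by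
  induction k generalizing X with
  | zero => exact hV0 X
  | succ n ih =>
    have hm := attMax_mem R (grSeq R V0 n) ih X
    have hv := ih X
    simp only [grSeq, grStep]
    set m := attMax R (grSeq R V0 n) X
    set v := grSeq R V0 n X
    have hmin : (0:ℝ) ≤ min (1/2) (1 - m) := le_min (by norm_num) (by linarith [hm.2])
    have hmax : max (1/2:ℝ) (1 - m) ≤ 1 := max_le (by norm_num) (by linarith [hm.1])
    have hle : min (1/2:ℝ) (1 - m) ≤ max (1/2) (1 - m) := min_le_max
    constructor
    · nlinarith [hv.1, hv.2, hmin, hmax, hle]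
    · nlinarith [hv.1, hv.2, hmin, hmax, hle]

theorem stmt7 [Fintype S] [Nonempty S] (R : S → S → Prop) [DecidableRel R]
    (V0 : S → ℝ) (hV0 : ∀ X, V0 X ∈ Set.Icc (0:ℝ) 1) :
    ∀ (X : S) (k : ℕ),
      (grSeq R V0 k X = 0 → grSeq R V0 (k + 1) X ≠ 1) ∧
      (grSeq R V0 k X = 1 → grSeq R V0 (k + 1) X ≠ 0) ∧
      (0 < grSeq R V0 k X → grSeq R V0 k X < 1 →
        0 < grSeq R V0 (k + 1) X ∧ grSeq R V0 (k + 1) X < 1) := by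
  intro X k
  have hm := attMax_mem R (grSeq R V0 k) (grSeq_mem R V0 hV0 k) X
  have hv := grSeq_mem R V0 hV0 k X
  have hstep : grSeq R V0 (k+1) X =
      (1 - grSeq R V0 k X) * min (1/2) (1 - attMax R (grSeq R V0 k) X)
      + grSeq R V0 k X * max (1/2) (1 - attMax R (grSeq R V0 k) X) := rfl
  set m := attMax R (grSeq R V0 k) X
  set v := grSeq R V0 k X
  have hmin0 : (0:ℝ) ≤ min (1/2) (1 - m) := le_min (by norm_num) (by linarith [hm.2])
  have hminh : min (1/2:ℝ) (1 - m) ≤ 1/2 := min_le_left _ _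
  have hmaxh : (1/2:ℝ) ≤ max (1/2) (1 - m) := le_max_left _ _
  have hmax1 : max (1/2:ℝ) (1 - m) ≤ 1 := max_le (by norm_num) (by linarith [hm.1])
  refine ⟨fun h0 h1 => ?_, fun h1 h0 => ?_, fun hp hl => ?_⟩
  · rw [hstep, h0] at h1; simp at h1; linarith
  · rw [hstep, h1] at h0; simp at h0; linarith
  · constructor
    · rw [hstep]; nlinarith
    · rw [hstep]; nlinarith
end

section
/- Let (S,R) be an argumentation network and f : S → [0,1] an assignment. Then there exists h : S → [0,1] such that: (i) in(h) ⊆ in(f) and out(h) ⊆ out(f); (ii) if h(X) = 1 then h(Y) = 0 for all Y ∈ Att(X); (iii) if h(X) = 0 then h(Y) = 1 for some Y ∈ Att(X); and (iv) for every g : S → [0,1] satisfying (i)–(iii) in place of h, in(g) ⊆ in(h) and out(g) ⊆ out(h). -/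
open Filter Topology

variable {S : Type*}

theorem stmt11 [Fintype S] [Nonempty S] (R : S → S → Prop) [DecidableRel R]
    (f : S → ℝ) (hf : ∀ X, f X ∈ Set.Icc (0:ℝ) 1) :
    ∃ h : S → ℝ, (∀ X, h X ∈ Set.Icc (0:ℝ) 1) ∧
      inSet h ⊆ inSet f ∧ outSet h ⊆ outSet f ∧
      (∀ X, h X = 1 → ∀ Y, R Y X → h Y = 0) ∧
      (∀ X, h X = 0 → ∃ Y, R Y X ∧ h Y = 1) ∧
      (∀ g : S → ℝ, (∀ X, g X ∈ Set.Icc (0:ℝ) 1) →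
        inSet g ⊆ inSet f → outSet g ⊆ outSet f →
        (∀ X, g X = 1 → ∀ Y, R Y X → g Y = 0) →
        (∀ X, g X = 0 → ∃ Y, R Y X ∧ g Y = 1) →
        inSet g ⊆ inSet h ∧ outSet g ⊆ outSet h) := by
  classical
  -- A "legal" pair of sets (I, O)
  set legal : Set S → Set S → Prop := fun I O =>
    (∀ X ∈ I, f X = 1) ∧ (∀ X ∈ O, f X = 0) ∧
    (∀ X ∈ I, ∀ Y, R Y X → Y ∈ O) ∧ (∀ X ∈ O, ∃ Y ∈ I, R Y X) with hlegal
  set Istar : Set S := {X | ∃ I O, legal I O ∧ X ∈ I} with hIs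
  set Ostar : Set S := {X | ∃ I O, legal I O ∧ X ∈ O} with hOs
  have hIf : ∀ X ∈ Istar, f X = 1 := by
    rintro X ⟨I, O, hL, hX⟩; exact hL.1 X hX
  have hOf : ∀ X ∈ Ostar, f X = 0 := by
    rintro X ⟨I, O, hL, hX⟩; exact hL.2.1 X hX
  have hdisj : ∀ X, X ∈ Istar → X ∈ Ostar → False := by
    intro X h1 h2
    have e1 := hIf X h1; have e2 := hOf X h2
    rw [e2] at e1; norm_num at e1
  refine ⟨fun X => if X ∈ Istar then 1 else if X ∈ Ostar then 0 else 1/2, ?_, ?_, ?_, ?_, ?_, ?_⟩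
  · intro X
    by_cases h1 : X ∈ Istar <;> by_cases h2 : X ∈ Ostar <;> simp [h1, h2] <;> norm_num
  · intro X hX
    simp only [inSet, Set.mem_setOf_eq] at hX ⊢
    by_cases h1 : X ∈ Istar
    · exact hIf X h1
    · by_cases h2 : X ∈ Ostar <;> simp [h1, h2] at hX <;> norm_num at hX
  · intro X hX
    simp only [outSet, Set.mem_setOf_eq] at hX ⊢
    by_cases h1 : X ∈ Istar
    · simp [h1] at hX
    · by_cases h2 : X ∈ Ostar
      · exact hOf X h2
      · simp [h1, h2] at hX
  · intro X hX Y hYX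
    by_cases h1 : X ∈ Istar
    · obtain ⟨I, O, hL, hXI⟩ := h1
      have hYO : Y ∈ Ostar := ⟨I, O, hL, hL.2.2.1 X hXI Y hYX⟩
      have hYnI : Y ∉ Istar := fun h => hdisj Y h hYO
      simp [hYnI, hYO]
    · by_cases h2 : X ∈ Ostar <;> simp [h1, h2] at hX <;> norm_num at hX
  · intro X hX
    by_cases h1 : X ∈ Istar
    · simp [h1] at hX
    · by_cases h2 : X ∈ Ostar
      · obtain ⟨I, O, hL, hXO⟩ := h2
        obtain ⟨Y, hYI, hYX⟩ := hL.2.2.2 X hXO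
        have hYs : Y ∈ Istar := ⟨I, O, hL, hYI⟩
        exact ⟨Y, hYX, by simp [hYs]⟩
      · simp [h1, h2] at hX
  · intro g hg hgin hgout hg1 hg0
    have hLg : legal (inSet g) (outSet g) := by
      refine ⟨fun X hX => hgin hX, fun X hX => hgout hX, ?_, ?_⟩
      · intro X hX Y hYX; exact hg1 X hX Y hYX
      · intro X hX
        obtain ⟨Y, hYX, hY1⟩ := hg0 X hX
        exact ⟨Y, hY1, hYX⟩
    constructor
    · intro X hX
      have hXs : X ∈ Istar := ⟨_, _, hLg, hX⟩
      simp only [inSet, Set.mem_setOf_eq]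
      simp [hXs]
    · intro X hX
      have hXs : X ∈ Ostar := ⟨_, _, hLg, hX⟩
      have hXn : X ∉ Istar := fun h => hdisj X h hXs
      simp only [outSet, Set.mem_setOf_eq]
      simp [hXn, hXs]
end

section
/- Let (S,R) be an argumentation network, f : S → [0,1] an assignment, and h : S → [0,1] an assignment such that: (i) in(h) ⊆ in(f) and out(h) ⊆ out(f); (ii) if h(X) = 1 then h(Y) = 0 for all Y ∈ Att(X); (iii) if h(X) = 0 then h(Y) = 1 for some Y ∈ Att(X). Then the set in(h) is an admissible subset of in(f). -/
open Filter Topology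

variable {S : Type*}

theorem stmt12 [Fintype S] [Nonempty S] (R : S → S → Prop) [DecidableRel R]
    (f : S → ℝ) (hf : ∀ X, f X ∈ Set.Icc (0:ℝ) 1)
    (h : S → ℝ) (hh : ∀ X, h X ∈ Set.Icc (0:ℝ) 1)
    (hin : inSet h ⊆ inSet f) (hout : outSet h ⊆ outSet f)
    (h1 : ∀ X, h X = 1 → ∀ Y, R Y X → h Y = 0)
    (h0 : ∀ X, h X = 0 → ∃ Y, R Y X ∧ h Y = 1) :
    admissible R (inSet h) ∧ inSet h ⊆ inSet f := by
  refine ⟨⟨fun X hX Y hY hR => ?_, fun X hX Y hR => ?_⟩, hin⟩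
  · have := h1 Y hY X hR
    simp [inSet] at hX
    linarith
  · obtain ⟨Z, hZ, hZ1⟩ := h0 Y (h1 X hX Y hR)
    exact ⟨Z, hZ1, hZ⟩
end

section
/- Let (S,R) be an argumentation network whose attack relation R is acyclic (there is no nonempty directed cycle under R), and let f : S → [0,1]. Define the sequence of assignments α_0 = f and α_{i+1}(X) = (1/2)·α_i(X) + (1/2)·min(f(X), 1 − max_{Y ∈ Att(X)} α_i(Y)), with the convention that the maximum over the empty set is 0. Define β : S → [0,1] by recursion on the (well-founded, since R is acyclic and S is finite) attack relation: β(X) = f(X) if Att(X) = ∅, and β(X) = min(f(X), 1 − max_{Y ∈ Att(X)} β(Y)) otherwise. Then for every X ∈ S, α_i(X) → β(X) as i → ∞. -/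
open Filter Topology

variable {S : Type*}

/-- The iteration sequence of Pereira et al. : `α₀ = f` and
`α_{i+1}(X) = (1/2)·α_i(X) + (1/2)·min(f(X), 1 − max_{Y ∈ Att(X)} α_i(Y))`. -/
noncomputable def alphaSeq [Fintype S] (R : S → S → Prop) [DecidableRel R]
    (f : S → ℝ) : ℕ → S → ℝ
  | 0 => f
  | i + 1 => fun X =>
      (1/2) * alphaSeq R f i X + (1/2) * min (f X) (1 - attMax R (alphaSeq R f i) X)

/-!
Along an acyclic attack relation the limits can be computed bottom-up. If every attacker `Y` of
`X` already satisfies `α_i(Y) → β(Y)`, then the target `min (f X) (1 - max_{Y ∈ Att(X)} α_i(Y))`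
of the averaging step converges to `min (f X) (1 - max_{Y ∈ Att(X)} β(Y)) = β(X)`, and a sequence
that moves halfway towards a convergent target at each step converges to the same limit.
-/

theorem tendsto_of_relaxation {a g : ℕ → ℝ} {c t : ℝ} (ht₀ : 0 < t) (ht₁ : t ≤ 1)
    (ha : ∀ i, a (i + 1) = (1 - t) * a i + t * g i) (hg : Tendsto g atTop (𝓝 c)) :
    Tendsto a atTop (𝓝 c) := by
  rw [Metric.tendsto_atTop] at hg ⊢
  intro ε hε
  obtain ⟨N, hN⟩ := hg (ε / 2) (half_pos hε)
  have hstep : ∀ k, |a (N + k + 1) - c| ≤ (1 - t) * |a (N + k) - c| + t * (ε / 2) := by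
    intro k
    have hgk : |g (N + k) - c| ≤ ε / 2 := (hN (N + k) le_self_add).le
    calc |a (N + k + 1) - c| = |(1 - t) * (a (N + k) - c) + t * (g (N + k) - c)| := by
          rw [ha]; ring_nf
      _ ≤ |(1 - t) * (a (N + k) - c)| + |t * (g (N + k) - c)| := abs_add_le _ _
      _ = (1 - t) * |a (N + k) - c| + t * |g (N + k) - c| := by
          rw [abs_mul, abs_mul, abs_of_nonneg (sub_nonneg.2 ht₁), abs_of_pos ht₀]
      _ ≤ (1 - t) * |a (N + k) - c| + t * (ε / 2) := by gcongr
  -- the excess of the error over `ε / 2` contracts by the factor `1 - t` at every step past `N`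
  have hdecay : ∀ k, |a (N + k) - c| - ε / 2 ≤ (1 - t) ^ k * (|a N - c| - ε / 2) := by
    intro k
    induction k with
    | zero => simp
    | succ k ih =>
      have h1t : 0 ≤ 1 - t := sub_nonneg.2 ht₁
      calc |a (N + (k + 1)) - c| - ε / 2 ≤ (1 - t) * (|a (N + k) - c| - ε / 2) := by
            rw [← add_assoc]; linarith [hstep k]
        _ ≤ (1 - t) * ((1 - t) ^ k * (|a N - c| - ε / 2)) := by gcongr
        _ = (1 - t) ^ (k + 1) * (|a N - c| - ε / 2) := by ring
  have hpow : Tendsto (fun k => (1 - t) ^ k * (|a N - c| - ε / 2)) atTop (𝓝 0) := by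
    simpa using (tendsto_pow_atTop_nhds_zero_of_lt_one (by linarith) (by linarith)).mul_const
      (|a N - c| - ε / 2)
  obtain ⟨K, hK⟩ := eventually_atTop.1 (hpow.eventually (gt_mem_nhds (half_pos hε)))
  refine ⟨N + K, fun n hn => ?_⟩
  obtain ⟨k, rfl⟩ := Nat.exists_eq_add_of_le (le_of_add_le_left hn)
  rw [Real.dist_eq]
  linarith [hdecay k, hK k (by omega)]

theorem tendsto_finset_fold_max {ι α β : Type*} [LinearOrder α] [TopologicalSpace α]
    [OrderClosedTopology α] {l : Filter β} (s : Finset ι) (b : α) {F : β → ι → α} {G : ι → α}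
    (h : ∀ Y ∈ s, Tendsto (fun i => F i Y) l (𝓝 (G Y))) :
    Tendsto (fun i => s.fold max b (F i)) l (𝓝 (s.fold max b G)) := by
  classical
  induction s using Finset.induction_on with
  | empty => exact tendsto_const_nhds
  | insert Y s hY ih =>
    simp only [Finset.fold_insert hY]
    exact (h Y (Finset.mem_insert_self Y s)).max
      (ih fun Z hZ => h Z (Finset.mem_insert_of_mem hZ))

section attMax

variable [Fintype S] {R : S → S → Prop} [DecidableRel R]

theorem tendsto_attMax {β : Type*} {l : Filter β} {V : β → S → ℝ} {W : S → ℝ} {X : S}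
    (h : ∀ Y, R Y X → Tendsto (fun i => V i Y) l (𝓝 (W Y))) :
    Tendsto (fun i => attMax R (V i) X) l (𝓝 (attMax R W X)) :=
  tendsto_finset_fold_max _ _ fun Y hY => h Y (Finset.mem_filter.1 hY).2

theorem attMax_eq_zero_of_forall_not {V : S → ℝ} {X : S} (h : ∀ Y, ¬ R Y X) :
    attMax R V X = 0 := by
  simp [attMax, h]

end attMax

theorem wellFounded_of_forall_not_transGen [Finite S] {R : S → S → Prop}
    (hacyc : ∀ X, ¬ Relation.TransGen R X X) : WellFounded R :=
  haveI : Std.Irrefl (Relation.TransGen R) := ⟨hacyc⟩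
  Subrelation.wf Relation.TransGen.single (Finite.wellFounded_of_trans_of_irrefl _)

theorem stmt19_general [Fintype S] (R : S → S → Prop) [DecidableRel R]
    (hacyc : ∀ X : S, ¬ Relation.TransGen R X X)
    (f : S → ℝ) (hf : ∀ X, f X ∈ Set.Icc (0:ℝ) 1)
    (β : S → ℝ)
    (hβ0 : ∀ X : S, (∀ Y, ¬ R Y X) → β X = f X)
    (hβ1 : ∀ X : S, (∃ Y, R Y X) → β X = min (f X) (1 - attMax R β X)) :
    ∀ X : S, Tendsto (fun i => alphaSeq R f i X) atTop (nhds (β X)) := by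
  have hβ : ∀ X, min (f X) (1 - attMax R β X) = β X := by
    intro X
    by_cases hX : ∃ Y, R Y X
    · exact (hβ1 X hX).symm
    · rw [not_exists] at hX
      rw [attMax_eq_zero_of_forall_not hX, hβ0 X hX, sub_zero, min_eq_left (hf X).2]
  intro X
  induction X using (wellFounded_of_forall_not_transGen hacyc).induction with
  | _ X ih =>
    have htarget : Tendsto (fun i => min (f X) (1 - attMax R (alphaSeq R f i) X)) atTop
        (𝓝 (β X)) :=
      hβ X ▸ tendsto_const_nhds.min (tendsto_const_nhds.sub (tendsto_attMax ih))
    exact tendsto_of_relaxation one_half_pos (by norm_num)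
      (fun i => by simp only [alphaSeq]; norm_num) htarget

theorem stmt19 [Fintype S] [Nonempty S] (R : S → S → Prop) [DecidableRel R]
    (hacyc : ∀ X : S, ¬ Relation.TransGen R X X)
    (f : S → ℝ) (hf : ∀ X, f X ∈ Set.Icc (0:ℝ) 1)
    (β : S → ℝ) (hβr : ∀ X, β X ∈ Set.Icc (0:ℝ) 1)
    (hβ0 : ∀ X : S, (∀ Y, ¬ R Y X) → β X = f X)
    (hβ1 : ∀ X : S, (∃ Y, R Y X) → β X = min (f X) (1 - attMax R β X)) :
    ∀ X : S, Tendsto (fun i => alphaSeq R f i X) atTop (nhds (β X)) :=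
  stmt19_general R hacyc f hf β hβ0 hβ1
end
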